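/- Max-marginalizing a variable present in a single clique of a max-calibrated clique tree preserves the max-marginal beliefs of all other cliques and the overall maximum: if n appears only in clique C, replacing C by C\{n} with belief max over n.states of β(C) yields a clique tree whose beliefs are exactly the max-marginals of max over n.states of P. -/
import Mathlib


/-- `maxOver D A f` maximizes `f` over all assignments to the variables in `A`. -/
noncomputable def maxOver {V : Type*} (D : V → Type*) (A : Finset V)
    (f : (∀ v, D v) → ℝ) : (∀ v, D v) → ℝ :=
  fun x => ⨆ y : {y : ∀ v, D v // ∀ v ∉ A, y v = x v}, f y.1

section aux
set_option linter.unusedSectionVars false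
variable {V : Type*} [Fintype V] [DecidableEq V] {D : V → Type*}
    [∀ v, Fintype (D v)] [∀ v, Nonempty (D v)]

lemma le_maxOver (A : Finset V) (f : (∀ v, D v) → ℝ) (x y : ∀ v, D v)
    (h : ∀ v ∉ A, y v = x v) : f y ≤ maxOver D A f x :=
  le_ciSup (f := fun z : {y : ∀ v, D v // ∀ v ∉ A, y v = x v} => f z.1)
    (Set.finite_range _).bddAbove ⟨y, h⟩

lemma maxOver_le (A : Finset V) (f : (∀ v, D v) → ℝ) (x : ∀ v, D v) (r : ℝ)
    (h : ∀ y : ∀ v, D v, (∀ v ∉ A, y v = x v) → f y ≤ r) : maxOver D A f x ≤ r := by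
  haveI : Nonempty {y : ∀ v, D v // ∀ v ∉ A, y v = x v} := ⟨⟨x, fun _ _ => rfl⟩⟩
  exact ciSup_le fun y => h y.1 y.2

lemma maxOver_maxOver (A B : Finset V) (f : (∀ v, D v) → ℝ) (x : ∀ v, D v) :
    maxOver D B (maxOver D A f) x = maxOver D (A ∪ B) f x := by
  apply le_antisymm
  · apply maxOver_le
    intro y hy
    apply maxOver_le
    intro z hz
    apply le_maxOver
    intro v hv
    rw [Finset.mem_union] at hv
    push_neg at hv
    rw [hz v hv.1, hy v hv.2]
  · apply maxOver_le
    intro z hz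
    refine le_trans (le_maxOver A _ (fun v => if v ∈ B then z v else x v) z ?_) ?_
    · intro v hv
      by_cases hvB : v ∈ B
      · simp [hvB]
      · simp only [hvB, if_false]
        exact hz v (by simp [hv, hvB])
    · apply le_maxOver
      intro v hv
      simp [hv]

lemma iSup_maxOver (A : Finset V) (f : (∀ v, D v) → ℝ) :
    (⨆ x, maxOver D A f x) = ⨆ x, f x := by
  apply le_antisymm
  · refine ciSup_le fun x => maxOver_le _ _ _ _ fun y _ => le_ciSup (Set.finite_range f).bddAbove y
  · refine ciSup_le fun x => le_trans (le_maxOver A f x x fun v _ => rfl) ?_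
    exact le_ciSup (Set.finite_range (maxOver D A f)).bddAbove x

end aux

/-- max-marginalizing a variable `n` present in a single clique `c` of a
max-calibrated clique tree (where each belief is the max-marginal of `P` onto its clique)
preserves the max-marginal beliefs of all other cliques and the overall maximum: the new
beliefs (with `β c` replaced by `max over n.states of β c` on scope `Cl c \ {n}`) are
exactly the max-marginals of `P' = max over n.states of P`, and `max P' = max P`. -/
theorem single_clique_max_marginalization
    {V : Type*} [Fintype V] [DecidableEq V] {D : V → Type*}
    [∀ v, Fintype (D v)] [∀ v, Nonempty (D v)]
    {ι : Type*} [Fintype ι]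
    (Cl : ι → Finset V) (P : (∀ v, D v) → ℝ)
    (β : ι → (∀ v, D v) → ℝ)
    -- max-calibrated: each belief is the max-marginal of P onto its clique
    (hβ : ∀ i x, β i x = maxOver D (Finset.univ \ Cl i) P x)
    (n : V) (c : ι) (hc : n ∈ Cl c)
    -- n appears in no other clique
    (honly : ∀ i, n ∈ Cl i → i = c) :
    (∀ i, i ≠ c → ∀ x, β i x =
        maxOver D (Finset.univ \ Cl i) (maxOver D {n} P) x) ∧
    (∀ x, maxOver D {n} (β c) x =
        maxOver D (Finset.univ \ (Cl c \ {n})) (maxOver D {n} P) x) ∧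
    (⨆ x, maxOver D {n} P x) = ⨆ x, P x := by
  refine ⟨?_, ?_, ?_⟩
  · intro i hi x
    rw [hβ, maxOver_maxOver]
    congr 1
    have hn : n ∉ Cl i := fun h => hi (honly i h)
    rw [Finset.union_eq_right.mpr]
    intro v hv
    simp only [Finset.mem_singleton] at hv
    subst hv
    simp [hn]
  · intro x
    have h1 : β c = maxOver D (Finset.univ \ Cl c) P := by
      funext y; exact hβ c y
    rw [h1, maxOver_maxOver, maxOver_maxOver]
    congr 1
    ext v
    simp only [Finset.mem_union, Finset.mem_sdiff, Finset.mem_singleton, Finset.mem_univ,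
      true_and]
    by_cases hv : v = n <;> simp [hv, hc]
  · exact iSup_maxOver _ _
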